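/- Let ω be a symmetric (p,p)-double form satisfying the first Bianchi identity on an n-dimensional real inner product space (V,g). Then for all integers k > i ≥ 0 and every r with n−pk+pi+1 ≤ r ≤ pk−pi, the cofactor transformation vanishes: h_{(r,p(k−i))}(ω) = 0. In particular, if n = pk then h_{(r,n−pi)}(ω) = 0 for pi+1 ≤ r ≤ n−pi, and if n = pk+1 then h_{(r,n−pi−1)}(ω) = 0 for pi+2 ≤ r ≤ n−pi−1. -/

import Mathlib

noncomputable section

open Finset

/-- Double forms over an `n`-dimensional real inner product space, described by their
coefficients in a fixed orthonormal basis: a `(p,q)`-double form corresponds to a function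
supported on pairs of subsets of cardinalities `p` and `q`. -/
abbrev DForm (n : ℕ) := Finset (Fin n) → Finset (Fin n) → ℝ

namespace DForm

variable {n : ℕ}

/-- Sign of the shuffle placing the elements of `A` (in increasing order) before
those of `B` (in increasing order). -/
def shuffleSign (A B : Finset (Fin n)) : ℝ :=
  (-1 : ℝ) ^ (∑ x ∈ B, (A.filter fun a => x < a).card)

/-- The exterior product of double forms. -/
def wedge (ω₁ ω₂ : DForm n) : DForm n := fun I J =>
  ∑ A ∈ I.powerset, ∑ B ∈ J.powerset,
    shuffleSign A (I \ A) * shuffleSign B (J \ B) * ω₁ A B * ω₂ (I \ A) (J \ B)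

/-- Exterior powers `ω^k` of a double form. -/
def dpow (ω : DForm n) : ℕ → DForm n
  | 0 => fun I J => if I = ∅ ∧ J = ∅ then 1 else 0
  | k + 1 => wedge ω (dpow ω k)

/-- The double Hodge star operator. -/
def hstar (ω : DForm n) : DForm n := fun I J =>
  shuffleSign Iᶜ I * shuffleSign Jᶜ J * ω Iᶜ Jᶜ

/-- The contraction `c` of double forms. -/
def contr (ω : DForm n) : DForm n := fun I J =>
  ∑ j : Fin n,
    if j ∈ I ∨ j ∈ J then 0
    else shuffleSign {j} I * shuffleSign {j} J * ω (insert j I) (insert j J)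

/-- Iterated contraction `c^k`. -/
def citer (ω : DForm n) : ℕ → DForm n
  | 0 => ω
  | k + 1 => contr (citer ω k)

/-- The inner product of double forms. -/
def dinner (ω₁ ω₂ : DForm n) : ℝ :=
  ∑ I : Finset (Fin n), ∑ J : Finset (Fin n), ω₁ I J * ω₂ I J

/-- The transpose `ω^t` of a double form. -/
def transp (ω : DForm n) : DForm n := fun I J => ω J I

/-- The composition (Greub) product `ω₁ ∘ ω₂` of double forms. -/
def comp (ω₁ ω₂ : DForm n) : DForm n := fun I J =>
  ∑ K : Finset (Fin n), ω₂ I K * ω₁ K J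

/-- The scalar value of a `(0,0)`-double form. -/
def toScalar (ω : DForm n) : ℝ := ω ∅ ∅

/-- The metric, as a `(1,1)`-double form. -/
def gMetric (n : ℕ) : DForm n := fun I J => if I = J ∧ I.card = 1 then 1 else 0

/-- Iterated composition power `ω^{∘r}` of a `(1,1)`-double form, with `ω^{∘0} = g`. -/
def cpow (ω : DForm n) : ℕ → DForm n
  | 0 => gMetric n
  | r + 1 => comp ω (cpow ω r)

/-- The `(1,1)`-double form associated to a bilinear form, given by its matrix in the
orthonormal basis. -/
def ofMatrix (h : Matrix (Fin n) (Fin n) ℝ) : DForm n := fun I J =>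
  ∑ i : Fin n, ∑ j : Fin n, if I = {i} ∧ J = {j} then h i j else 0

/-- `ω` is a `(p,q)`-double form. -/
def IsOfDeg (ω : DForm n) (p q : ℕ) : Prop :=
  ∀ I J : Finset (Fin n), ω I J ≠ 0 → I.card = p ∧ J.card = q

/-- `ω` is a symmetric double form. -/
def IsSym (ω : DForm n) : Prop := ∀ I J, ω I J = ω J I

/-- The sign relating `e_{v 0} ∧ ⋯ ∧ e_{v (p-1)}` to the corresponding increasing
basis `p`-vector (and `0` if the indices are not pairwise distinct). -/
def tupleSign {p : ℕ} (v : Fin p → Fin n) : ℝ :=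
  if Function.Injective v then (((Equiv.Perm.sign (Tuple.sort v)) : ℤ) : ℝ) else 0

/-- Evaluation of a double form on wedges of basis vectors indexed by arbitrary tuples. -/
def evalT (ω : DForm n) {p q : ℕ} (v : Fin p → Fin n) (w : Fin q → Fin n) : ℝ :=
  tupleSign v * tupleSign w * ω (Finset.image v Finset.univ) (Finset.image w Finset.univ)

/-- The first Bianchi identity for a `(2,2)`-double form:
`R(x∧y,z∧t) + R(y∧z,x∧t) + R(z∧x,y∧t) = 0`. -/
def Bianchi2 (R : DForm n) : Prop :=
  ∀ x y z t : Fin n,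
    evalT R ![x, y] ![z, t] + evalT R ![y, z] ![x, t] + evalT R ![z, x] ![y, t] = 0

/-- The first Bianchi identity for a `(p,p)`-double form. -/
def FirstBianchi (ω : DForm n) (p : ℕ) : Prop :=
  ∀ (x : Fin (p + 1) → Fin n) (y : Fin (p - 1) → Fin n),
    ∑ j : Fin (p + 1),
      (-1 : ℝ) ^ (j : ℕ) * evalT ω (x ∘ Fin.succAbove j) (Fin.cons (x j) y) = 0

/-- The characteristic coefficient `s_k(h)` of a bilinear form `h`, defined through the
characteristic polynomial: `det(h - λ g) = ∑ (-1)^(n-i) s_i(h) λ^(n-i)`. -/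
def sInv (h : Matrix (Fin n) (Fin n) ℝ) (k : ℕ) : ℝ :=
  (-1 : ℝ) ^ k * (Matrix.charpoly h).coeff (n - k)

/-- The `k`-th cofactor (Newton) transformation `t_k(h) = (1/(k!(n-1-k)!)) *(g^{n-1-k} h^k)`. -/
def tInv (h : Matrix (Fin n) (Fin n) ℝ) (k : ℕ) : DForm n :=
  ((k.factorial * (n - 1 - k).factorial : ℕ) : ℝ)⁻¹ •
    hstar (wedge (dpow (gMetric n) (n - 1 - k)) (dpow (ofMatrix h) k))

/-- The `(r,q)`-cofactor `s_{(r,q)}(h) = (1/(q!(n-q-r)!)) *(g^{n-q-r} h^q)`. -/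
def sCof (h : Matrix (Fin n) (Fin n) ℝ) (r q : ℕ) : DForm n :=
  ((q.factorial * (n - q - r).factorial : ℕ) : ℝ)⁻¹ •
    hstar (wedge (dpow (gMetric n) (n - q - r)) (dpow (ofMatrix h) q))

end DForm
namespace DForm
/-- The `(r,pq)`-cofactor transformation of a `(p,p)`-double form, defined by the expansion
`h_{(r,pq)}(ω) = ∑_{i=max(0,pq-r)}^{pq} ((-1)^{i+pq}/(i! (r-pq+i)!)) g^{r-pq+i} c^i(ω^q)`. -/
noncomputable def hCof {n : ℕ} (ω : DForm n) (p q r : ℕ) : DForm n :=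
  ∑ i ∈ Finset.Icc (p * q - r) (p * q),
    ((-1 : ℝ) ^ (i + p * q) /
        ((i.factorial : ℝ) * ((r + i - p * q).factorial : ℝ))) •
      wedge (dpow (gMetric n) (r + i - p * q)) (citer (dpow ω q) i)
end DForm

/-!
With `P = p q` and `θ = ω^q`, expanding `g^m` (a diagonal form) and the iterated contraction `c^i`
writes each coefficient `h_{(r,P)}(ω)(I, J)` as a signed sum, over pairs `(A, S)` with `A ⊆ I ∩ J`
the block taken by `g^{r+|S|-P}` and `S` the contracted indices, of `±θ(S ∪ I∖A, S ∪ J∖A)`.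
Putting the least index of `I ∩ J` that lies in `S` or outside `A` into both `A` and `S`, or
taking it out of both, leaves the arguments of `θ` unchanged but flips the sign `(-1)^|S|`.
Where this move is impossible the term vanishes since `θ` has degree `(P, P)`: if there is no such
index, the first argument of `θ` (of size `P`) is disjoint from `J` (then of size `r`), which
forces `r + P ≤ n`. So the whole sum cancels once `r + P > n`.
-/

lemma Finset.sum_sum_powersetCard_erase_insert {α β : Type*} [DecidableEq α] [AddCommMonoid β]
    (X : Finset α) (k : ℕ) (f : Finset α → β) :
    ∑ j ∈ X, ∑ S ∈ (X.erase j).powersetCard k, f (insert j S) =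
      (k + 1) • ∑ T ∈ X.powersetCard (k + 1), f T := by
  calc ∑ j ∈ X, ∑ S ∈ (X.erase j).powersetCard k, f (insert j S)
      = ∑ j ∈ X, ∑ T ∈ (X.powersetCard (k + 1)).filter (j ∈ ·), f T := by
        refine sum_congr rfl fun j hj => sum_nbij' (insert j) (erase · j) ?_ ?_ ?_ ?_ ?_
        · intro S hS
          simp only [mem_filter, mem_powersetCard] at hS ⊢
          have hjS : j ∉ S := fun h => notMem_erase j X (hS.1 h)
          exact ⟨⟨insert_subset hj (hS.1.trans (erase_subset j X)),
            by rw [card_insert_of_notMem hjS, hS.2]⟩, mem_insert_self j S⟩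
        · intro T hT
          simp only [mem_filter, mem_powersetCard] at hT ⊢
          exact ⟨erase_subset_erase j hT.1.1, by rw [card_erase_of_mem hT.2, hT.1.2]; rfl⟩
        · intro S hS
          simp only [mem_powersetCard] at hS
          exact erase_insert fun h => notMem_erase j X (hS.1 h)
        · intro T hT
          simp only [mem_filter] at hT
          exact insert_erase hT.2
        · intro S _
          rfl
    _ = ∑ T ∈ X.powersetCard (k + 1), ∑ _j ∈ T, f T :=
        sum_comm' fun j T => by
          simp only [mem_filter, mem_powersetCard]
          exact ⟨fun h => ⟨h.2.2, h.2.1⟩, fun h => ⟨h.2.1 h.1, h.2, h.1⟩⟩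
    _ = (k + 1) • ∑ T ∈ X.powersetCard (k + 1), f T := by
        rw [smul_sum]
        refine sum_congr rfl fun T hT => ?_
        rw [sum_const, (mem_powersetCard.1 hT).2]

namespace DForm

variable {n : ℕ}

lemma shuffleSign_mul_self (A B : Finset (Fin n)) : shuffleSign A B * shuffleSign A B = 1 := by
  rw [shuffleSign, ← mul_pow]; norm_num

lemma shuffleSign_empty_left (B : Finset (Fin n)) : shuffleSign ∅ B = 1 := by
  simp [shuffleSign]

lemma shuffleSign_insert_left {A : Finset (Fin n)} {j : Fin n} (h : j ∉ A) (B : Finset (Fin n)) :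
    shuffleSign (insert j A) B = shuffleSign {j} B * shuffleSign A B := by
  rw [shuffleSign, shuffleSign, shuffleSign, ← pow_add, ← sum_add_distrib]
  congr 1
  refine sum_congr rfl fun x _ => ?_
  rw [filter_insert, filter_singleton]
  split_ifs with hx
  · rw [card_insert_of_notMem fun hj => h (mem_of_mem_filter j hj), card_singleton, add_comm]
  · rw [card_empty, zero_add]

lemma shuffleSign_insert_right (A : Finset (Fin n)) {B : Finset (Fin n)} {x : Fin n} (h : x ∉ B) :
    shuffleSign A (insert x B) = shuffleSign A {x} * shuffleSign A B := by
  rw [shuffleSign, shuffleSign, shuffleSign, ← pow_add, sum_insert h, sum_singleton]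

lemma IsOfDeg.wedge {ω₁ ω₂ : DForm n} {p q u v : ℕ} (h₁ : IsOfDeg ω₁ p q)
    (h₂ : IsOfDeg ω₂ u v) : IsOfDeg (wedge ω₁ ω₂) (p + u) (q + v) := by
  intro I J h
  obtain ⟨A, hA, h⟩ := exists_ne_zero_of_sum_ne_zero h
  obtain ⟨B, hB, h⟩ := exists_ne_zero_of_sum_ne_zero h
  obtain ⟨hA₁, hB₁⟩ := h₁ A B (right_ne_zero_of_mul (left_ne_zero_of_mul h))
  obtain ⟨hA₂, hB₂⟩ := h₂ _ _ (right_ne_zero_of_mul h)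
  rw [mem_powerset] at hA hB
  rw [← card_sdiff_add_card_eq_card hA, ← card_sdiff_add_card_eq_card hB]
  omega

lemma IsOfDeg.dpow {ω : DForm n} {p : ℕ} (h : IsOfDeg ω p p) :
    ∀ q, IsOfDeg (dpow ω q) (p * q) (p * q)
  | 0 => by
    intro I J hIJ
    simp only [DForm.dpow, ne_eq, ite_eq_right_iff, Classical.not_imp] at hIJ
    simp [hIJ.1]
  | q + 1 => by
    rw [show p * (q + 1) = p + p * q by ring]
    exact h.wedge (IsOfDeg.dpow h q)

lemma wedge_apply_of_diag {ψ : DForm n} {m : ℕ} {c : ℝ}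
    (hψ : ∀ A B, ψ A B = if A = B ∧ A.card = m then c else 0) (φ : DForm n) (I J : Finset (Fin n)) :
    wedge ψ φ I J = c * ∑ A ∈ (I ∩ J).powersetCard m,
      shuffleSign A (I \ A) * shuffleSign A (J \ A) * φ (I \ A) (J \ A) := by
  simp only [wedge, hψ, ite_and, mul_ite, mul_zero, ite_mul, zero_mul, sum_ite_eq, mem_powerset]
  simp_rw [← ite_and]
  rw [← sum_filter, mul_sum]
  refine sum_congr ?_ fun A _ => by ring
  ext A
  simp [subset_inter_iff, and_assoc]

lemma dpow_gMetric_apply (m : ℕ) (I J : Finset (Fin n)) :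
    dpow (gMetric n) m I J = if I = J ∧ I.card = m then (m.factorial : ℝ) else 0 := by
  induction m generalizing I J with
  | zero =>
    simp only [dpow, card_eq_zero, Nat.factorial_zero, Nat.cast_one]
    grind
  | succ m ih =>
    rw [dpow, wedge_apply_of_diag (ψ := gMetric n) (m := 1) (c := 1) fun _ _ => rfl, one_mul]
    simp only [ih]
    split_ifs with h
    · obtain ⟨rfl, hI⟩ := h
      rw [inter_self, sum_congr rfl fun A hA => ?_, sum_const, card_powersetCard, hI,
        Nat.choose_one_right, nsmul_eq_mul, Nat.factorial_succ, Nat.cast_mul]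
      rw [mem_powersetCard] at hA
      rw [if_pos ⟨rfl, by rw [card_sdiff_of_subset hA.1, hA.2, hI]; rfl⟩, shuffleSign_mul_self,
        one_mul]
    · refine sum_eq_zero fun A hA => ?_
      rw [mem_powersetCard, subset_inter_iff] at hA
      rw [if_neg, mul_zero]
      rintro ⟨he, hcard⟩
      refine h ⟨?_, ?_⟩
      · rw [← sdiff_union_of_subset hA.1.1, ← sdiff_union_of_subset hA.1.2, he]
      · rw [← card_sdiff_add_card_eq_card hA.1.1, hcard, hA.2]

lemma wedge_dpow_gMetric_apply (m : ℕ) (φ : DForm n) (I J : Finset (Fin n)) :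
    wedge (dpow (gMetric n) m) φ I J = (m.factorial : ℝ) * ∑ A ∈ (I ∩ J).powersetCard m,
      shuffleSign A (I \ A) * shuffleSign A (J \ A) * φ (I \ A) (J \ A) :=
  wedge_apply_of_diag (dpow_gMetric_apply m) φ I J

lemma citer_apply (θ : DForm n) (i : ℕ) (I J : Finset (Fin n)) :
    citer θ i I J = (i.factorial : ℝ) * ∑ S ∈ (I ∪ J)ᶜ.powersetCard i,
      shuffleSign S I * shuffleSign S J * θ (S ∪ I) (S ∪ J) := by
  induction i generalizing I J with
  | zero => simp [citer, shuffleSign_empty_left]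
  | succ k ih =>
    have insert_term : ∀ j ∈ (I ∪ J)ᶜ,
        shuffleSign {j} I * shuffleSign {j} J * citer θ k (insert j I) (insert j J)
        = (k.factorial : ℝ) * ∑ S ∈ ((I ∪ J)ᶜ.erase j).powersetCard k,
            shuffleSign (insert j S) I * shuffleSign (insert j S) J *
              θ (insert j S ∪ I) (insert j S ∪ J) := by
      intro j hj
      simp only [mem_compl, mem_union, not_or] at hj
      rw [ih, ← insert_union_distrib, compl_insert, mul_left_comm, mul_sum]
      refine congrArg _ (sum_congr rfl fun S hS => ?_)
      have hjS : j ∉ S := fun h => (notMem_erase j _) ((mem_powersetCard.1 hS).1 h)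
      rw [shuffleSign_insert_right S hj.1, shuffleSign_insert_right S hj.2,
        shuffleSign_insert_left hjS I, shuffleSign_insert_left hjS J, union_insert,
        union_insert, insert_union, insert_union]
      linear_combination (shuffleSign {j} I * shuffleSign {j} J * shuffleSign S I *
        shuffleSign S J * θ (insert j (S ∪ I)) (insert j (S ∪ J))) * shuffleSign_mul_self S {j}
    have hsupp : (univ.filter fun j => ¬(j ∈ I ∨ j ∈ J)) = (I ∪ J)ᶜ := by ext; simp
    rw [citer, contr, sum_ite, sum_const_zero, zero_add, hsupp, sum_congr rfl insert_term,
      ← mul_sum, sum_sum_powersetCard_erase_insert (I ∪ J)ᶜ k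
        fun T => shuffleSign T I * shuffleSign T J * θ (T ∪ I) (T ∪ J),
      nsmul_eq_mul, Nat.factorial_succ]
    push_cast
    ring

/-- The term indexed by `(A, S)` comes from the summand `i = |S|` of `hCof`: `A` is the block
absorbed by `g^{r+i-P}` and `S` the set of `i` contracted indices. -/
def cofactorIndex (P r : ℕ) (I J : Finset (Fin n)) : Finset (Finset (Fin n) × Finset (Fin n)) :=
  ((I ∩ J).powerset ×ˢ univ).filter fun x =>
    Disjoint x.2 (I \ x.1 ∪ J \ x.1) ∧ x.2.card ≤ P ∧ x.1.card + P = r + x.2.card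

def cofactorTerm (θ : DForm n) (I J : Finset (Fin n)) (x : Finset (Fin n) × Finset (Fin n)) :
    ℝ :=
  (-1) ^ x.2.card * (shuffleSign x.1 (I \ x.1) * shuffleSign x.1 (J \ x.1) *
    (shuffleSign x.2 (I \ x.1) * shuffleSign x.2 (J \ x.1) * θ (x.2 ∪ I \ x.1) (x.2 ∪ J \ x.1)))

/-- The indices that can be moved into or out of both components of `x` without changing the
arguments of `θ` in `cofactorTerm`. -/
def pivots (I J : Finset (Fin n)) (x : Finset (Fin n) × Finset (Fin n)) : Finset (Fin n) :=
  (I ∩ J) \ (x.1 \ x.2)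

def toggleAt (a : Fin n) (x : Finset (Fin n) × Finset (Fin n)) : Finset (Fin n) × Finset (Fin n) :=
  if a ∈ x.1 then (x.1.erase a, x.2.erase a) else (insert a x.1, insert a x.2)

def toggle (P : ℕ) (I J : Finset (Fin n)) (x : Finset (Fin n) × Finset (Fin n)) :
    Finset (Fin n) × Finset (Fin n) :=
  if h : (pivots I J x).Nonempty then
    if (pivots I J x).min' h ∈ x.1 ∨ x.2.card < P then toggleAt ((pivots I J x).min' h) x else x
  else x

section Cancellation

variable {θ : DForm n} {P r : ℕ} {I J : Finset (Fin n)} {a : Fin n}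
  {x : Finset (Fin n) × Finset (Fin n)}

lemma mem_cofactorIndex :
    x ∈ cofactorIndex P r I J ↔ x.1 ⊆ I ∩ J ∧
      Disjoint x.2 (I \ x.1 ∪ J \ x.1) ∧ x.2.card ≤ P ∧ x.1.card + P = r + x.2.card := by
  simp only [cofactorIndex, mem_filter, mem_product, mem_powerset, mem_univ, and_true]

lemma sum_Icc_sum_powersetCard_eq_sum_cofactorIndex (P r : ℕ) (I J : Finset (Fin n))
    (f : Finset (Fin n) × Finset (Fin n) → ℝ) :
    ∑ i ∈ Icc (P - r) P, ∑ A ∈ (I ∩ J).powersetCard (r + i - P),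
        ∑ S ∈ (I \ A ∪ J \ A)ᶜ.powersetCard i, f (A, S) =
      ∑ x ∈ cofactorIndex P r I J, f x := by
  rw [sum_sigma', sum_sigma']
  refine sum_nbij' (fun x => (x.1.2, x.2)) (fun x => ⟨⟨x.2.card, x.1⟩, x.2⟩) ?_ ?_ ?_ ?_ ?_
  · rintro ⟨⟨i, A⟩, S⟩ hx
    simp only [mem_sigma, mem_Icc, mem_powersetCard, subset_compl_iff_disjoint_right] at hx
    obtain ⟨⟨⟨hi₁, hi₂⟩, hA, hcA⟩, hS, hcS⟩ := hx
    simp only [mem_cofactorIndex]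
    exact ⟨hA, hS, by omega, by omega⟩
  · rintro ⟨A, S⟩ hx
    simp only [mem_cofactorIndex] at hx
    obtain ⟨hA, hS, hcS, hcA⟩ := hx
    simp only [mem_sigma, mem_Icc, mem_powersetCard, subset_compl_iff_disjoint_right, and_true]
    exact ⟨⟨⟨by omega, hcS⟩, hA, by omega⟩, hS⟩
  · rintro ⟨⟨i, A⟩, S⟩ hx
    simp only [mem_sigma, mem_powersetCard] at hx
    simp only [hx.2.2]
  · intro x _
    rfl
  · intro x _
    rfl

lemma hCof_apply (ω : DForm n) (p q r : ℕ) (I J : Finset (Fin n)) :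
    hCof ω p q r I J =
      (-1) ^ (p * q) * ∑ x ∈ cofactorIndex (p * q) r I J, cofactorTerm (dpow ω q) I J x := by
  simp only [hCof, Finset.sum_apply, Pi.smul_apply, smul_eq_mul]
  rw [← sum_Icc_sum_powersetCard_eq_sum_cofactorIndex, mul_sum]
  refine sum_congr rfl fun i _ => ?_
  simp only [wedge_dpow_gMetric_apply, citer_apply, mul_sum]
  refine sum_congr rfl fun A _ => sum_congr rfl fun S hS => ?_
  rw [cofactorTerm, (mem_powersetCard.1 hS).2]
  field_simp
  ring

lemma mem_toggleAt_fst : a ∈ (toggleAt a x).1 ↔ a ∉ x.1 := by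
  unfold toggleAt
  split_ifs with h <;> simp [h]

lemma toggleAt_ne_self : toggleAt a x ≠ x :=
  fun h => iff_not_self (h ▸ mem_toggleAt_fst)

lemma toggleAt_toggleAt (ha : a ∈ x.1 ↔ a ∈ x.2) : toggleAt a (toggleAt a x) = x := by
  unfold toggleAt
  by_cases h : a ∈ x.1
  · simp [h, insert_erase, ha.1 h]
  · simp [h, mt ha.2 h]

lemma pivots_toggleAt (ha : a ∈ x.1 ↔ a ∈ x.2) : pivots I J (toggleAt a x) = pivots I J x := by
  unfold pivots toggleAt
  split_ifs <;> ext b <;> by_cases hb : b = a <;> simp [hb] <;> tauto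

lemma mem_fst_iff_mem_snd_of_mem_pivots (hx : x ∈ cofactorIndex P r I J)
    (ha : a ∈ pivots I J x) : a ∈ x.1 ↔ a ∈ x.2 := by
  rw [mem_cofactorIndex, disjoint_union_right, disjoint_left] at hx
  simp only [pivots, mem_sdiff, mem_inter] at ha
  exact ⟨fun h => by tauto, fun h => by_contra fun h' => hx.2.1.1 h (mem_sdiff.2 ⟨ha.1.1, h'⟩)⟩

lemma cofactorTerm_insert_insert (θ : DForm n) {A S : Finset (Fin n)} (haI : a ∈ I)
    (haJ : a ∈ J) (haA : a ∉ A) (haS : a ∉ S) :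
    cofactorTerm θ I J (insert a A, insert a S) = -cofactorTerm θ I J (A, S) := by
  obtain ⟨B, hB, haB⟩ : ∃ B, I \ A = insert a B ∧ a ∉ B :=
    ⟨_, (insert_erase (mem_sdiff.2 ⟨haI, haA⟩)).symm, notMem_erase a _⟩
  obtain ⟨C, hC, haC⟩ : ∃ C, J \ A = insert a C ∧ a ∉ C :=
    ⟨_, (insert_erase (mem_sdiff.2 ⟨haJ, haA⟩)).symm, notMem_erase a _⟩
  simp only [cofactorTerm]
  rw [sdiff_insert, sdiff_insert, hB, hC, erase_insert haB, erase_insert haC, insert_union,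
    insert_union, union_insert, union_insert, card_insert_of_notMem haS, pow_succ,
    shuffleSign_insert_left haA, shuffleSign_insert_left haA, shuffleSign_insert_left haS,
    shuffleSign_insert_left haS, shuffleSign_insert_right A haB, shuffleSign_insert_right A haC,
    shuffleSign_insert_right S haB, shuffleSign_insert_right S haC]
  linear_combination (θ (insert a (S ∪ B)) (insert a (S ∪ C)) * (-1) ^ #S * shuffleSign A B *
      shuffleSign A C * shuffleSign S B * shuffleSign S C) *
    (shuffleSign A {a} * shuffleSign A {a} * shuffleSign_mul_self S {a} +
      shuffleSign_mul_self A {a} - shuffleSign {a} C * shuffleSign {a} C *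
      shuffleSign_mul_self {a} B - shuffleSign_mul_self {a} C)

lemma cofactorTerm_toggleAt (θ : DForm n) (haI : a ∈ I) (haJ : a ∈ J) (ha : a ∈ x.1 ↔ a ∈ x.2) :
    cofactorTerm θ I J (toggleAt a x) = -cofactorTerm θ I J x := by
  obtain ⟨A, S⟩ := x
  by_cases h : a ∈ A
  · have hx : (A, S) = (insert a (A.erase a), insert a (S.erase a)) := by
      rw [insert_erase h, insert_erase (ha.1 h)]
    rw [toggleAt, if_pos h, hx, cofactorTerm_insert_insert θ haI haJ (notMem_erase a A)
      (notMem_erase a S), neg_neg, ← hx]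
  · rw [toggleAt, if_neg h]
    exact cofactorTerm_insert_insert θ haI haJ h (mt ha.2 h)

lemma toggleAt_mem_cofactorIndex (hx : x ∈ cofactorIndex P r I J) (haI : a ∈ I) (haJ : a ∈ J)
    (ha : a ∈ x.1 ↔ a ∈ x.2) (hP : a ∈ x.1 ∨ x.2.card < P) :
    toggleAt a x ∈ cofactorIndex P r I J := by
  obtain ⟨A, S⟩ := x
  simp only [mem_cofactorIndex] at hx ha hP
  obtain ⟨hA, hS, hcS, hcA⟩ := hx
  dsimp only [toggleAt]
  split_ifs with h
  · have := card_pos.2 ⟨a, h⟩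
    have := card_pos.2 ⟨a, ha.1 h⟩
    simp only [mem_cofactorIndex, card_erase_of_mem h, card_erase_of_mem (ha.1 h)]
    refine ⟨(erase_subset a A).trans hA, ?_, by omega, by omega⟩
    simp only [disjoint_left, mem_union, mem_sdiff, mem_erase] at hS ⊢
    grind
  · simp only [mem_cofactorIndex, card_insert_of_notMem h, card_insert_of_notMem (mt ha.2 h)]
    refine ⟨insert_subset (mem_inter.2 ⟨haI, haJ⟩) hA, ?_, hP.resolve_left h, by omega⟩
    simp only [disjoint_left, mem_union, mem_sdiff, mem_insert] at hS ⊢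
    grind

lemma card_eq_of_cofactorTerm_ne_zero (hθ : IsOfDeg θ P P) (h : cofactorTerm θ I J x ≠ 0) :
    (x.2 ∪ I \ x.1).card = P ∧ (x.2 ∪ J \ x.1).card = P :=
  hθ _ _ (right_ne_zero_of_mul (right_ne_zero_of_mul (right_ne_zero_of_mul h)))

lemma cofactorTerm_eq_zero_of_pivots_eq_empty (hθ : IsOfDeg θ P P) (hn : n < r + P)
    (hx : x ∈ cofactorIndex P r I J) (h : pivots I J x = ∅) : cofactorTerm θ I J x = 0 := by
  obtain ⟨A, S⟩ := x
  rw [mem_cofactorIndex] at hx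
  obtain ⟨hA, hS, -, hcA⟩ := hx
  by_contra hne
  obtain ⟨hU, hV⟩ : (S ∪ I \ A).card = P ∧ (S ∪ J \ A).card = P :=
    card_eq_of_cofactorTerm_ne_zero hθ hne
  rw [pivots, sdiff_eq_empty_iff_subset] at h
  rw [disjoint_union_right] at hS
  have hUJ : Disjoint (S ∪ I \ A) J := by
    simp only [disjoint_left, mem_union, mem_sdiff, subset_iff, mem_inter] at hS h hA ⊢
    grind
  have hJ : J.card = r := by
    rw [card_union_of_disjoint hS.2, card_sdiff_of_subset (hA.trans inter_subset_right)] at hV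
    have := card_le_card (hA.trans inter_subset_right)
    omega
  have := card_le_univ (S ∪ I \ A ∪ J)
  rw [card_union_of_disjoint hUJ, Fintype.card_fin] at this
  omega

lemma cofactorTerm_eq_zero_of_blocked (hθ : IsOfDeg θ P P) (hx : x ∈ cofactorIndex P r I J)
    (haI : a ∈ I) (haA : a ∉ x.1) (hP : P ≤ x.2.card) : cofactorTerm θ I J x = 0 := by
  rw [mem_cofactorIndex, disjoint_union_right] at hx
  by_contra hne
  have hU := (card_eq_of_cofactorTerm_ne_zero hθ hne).1
  rw [card_union_of_disjoint hx.2.1.1] at hU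
  have := card_pos.2 ⟨a, mem_sdiff.2 ⟨haI, haA⟩⟩
  omega

lemma toggle_cases (hθ : IsOfDeg θ P P) (hn : n < r + P) (hx : x ∈ cofactorIndex P r I J) :
    (toggle P I J x = x ∧ cofactorTerm θ I J x = 0) ∨
      ∃ a ∈ I ∩ J, (a ∈ x.1 ↔ a ∈ x.2) ∧ (a ∈ x.1 ∨ x.2.card < P) ∧
        toggle P I J x = toggleAt a x ∧ toggle P I J (toggleAt a x) = x := by
  by_cases hne : (pivots I J x).Nonempty
  · set a := (pivots I J x).min' hne
    have ha : a ∈ pivots I J x := min'_mem _ hne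
    have hiff := mem_fst_iff_mem_snd_of_mem_pivots hx ha
    have haIJ : a ∈ I ∩ J := (mem_sdiff.1 ha).1
    by_cases hc : a ∈ x.1 ∨ x.2.card < P
    · refine .inr ⟨a, haIJ, hiff, hc, by simp [toggle, hne, hc, a], ?_⟩
      have hc' : a ∈ (toggleAt a x).1 ∨ (toggleAt a x).2.card < P := by
        by_cases h : a ∈ x.1
        · have := (mem_cofactorIndex.1 hx).2.2.1
          have := card_pos.2 ⟨a, hiff.1 h⟩
          simp only [toggleAt, if_pos h, card_erase_of_mem (hiff.1 h)]
          omega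
        · exact .inl (mem_toggleAt_fst.2 h)
      simp [toggle, pivots_toggleAt hiff, hne, hc', a, toggleAt_toggleAt hiff]
    · rw [not_or, not_lt] at hc
      exact .inl ⟨by simp [toggle, hne, a, hc],
        cofactorTerm_eq_zero_of_blocked hθ hx (mem_inter.1 haIJ).1 hc.1 hc.2⟩
  · exact .inl ⟨by simp [toggle, hne], cofactorTerm_eq_zero_of_pivots_eq_empty hθ hn hx
      (not_nonempty_iff_eq_empty.1 hne)⟩

lemma sum_cofactorTerm_eq_zero (hθ : IsOfDeg θ P P) (hn : n < r + P) (I J : Finset (Fin n)) :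
    ∑ x ∈ cofactorIndex P r I J, cofactorTerm θ I J x = 0 := by
  refine sum_involution (fun x _ => toggle P I J x) ?_ ?_ ?_ ?_
  · intro x hx
    rcases toggle_cases hθ hn hx with ⟨hfix, hzero⟩ | ⟨a, ha, hiff, -, htog, -⟩
    · rw [hfix, hzero, add_zero]
    · rw [htog, cofactorTerm_toggleAt θ (mem_inter.1 ha).1 (mem_inter.1 ha).2 hiff, add_neg_cancel]
  · intro x hx hne
    rcases toggle_cases hθ hn hx with ⟨-, hzero⟩ | ⟨a, -, -, -, htog, -⟩
    · exact absurd hzero hne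
    · exact htog ▸ toggleAt_ne_self
  · intro x hx
    rcases toggle_cases hθ hn hx with ⟨hfix, -⟩ | ⟨a, ha, hiff, hc, htog, -⟩
    · rwa [hfix]
    · rw [htog]
      exact toggleAt_mem_cofactorIndex hx (mem_inter.1 ha).1 (mem_inter.1 ha).2 hiff hc
  · intro x hx
    rcases toggle_cases hθ hn hx with ⟨hfix, -⟩ | ⟨a, -, -, -, htog, hinv⟩
    · rw [hfix, hfix]
    · rw [htog, hinv]

end Cancellation

lemma hCof_eq_zero {ω : DForm n} {p q r : ℕ} (hω : IsOfDeg ω p p) (hn : n < r + p * q) :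
    hCof ω p q r = 0 := by
  funext I J
  rw [hCof_apply, sum_cofactorTerm_eq_zero (hω.dpow q) hn, mul_zero]
  rfl

end DForm

open DForm in
theorem statement19_general (n p : ℕ) (ω : DForm n) (hgr : IsOfDeg ω p p) :
    (∀ k i r : ℕ, i < k → n + p * i + 1 ≤ r + p * k → r + p * i ≤ p * k →
      hCof ω p (k - i) r = 0) ∧
    (∀ k i r : ℕ, i < k → n = p * k → p * i + 1 ≤ r → r + p * i ≤ n →
      hCof ω p (k - i) r = 0) ∧
    (∀ k i r : ℕ, i < k → n = p * k + 1 → p * i + 2 ≤ r → r + p * i + 1 ≤ n →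
      hCof ω p (k - i) r = 0) := by
  have key : ∀ k i r : ℕ, i < k → n + p * i < r + p * k → hCof ω p (k - i) r = 0 := by
    intro k i r hik hn
    have := Nat.mul_le_mul_left p hik.le
    exact hCof_eq_zero hgr (by rw [Nat.mul_sub]; omega)
  exact ⟨fun k i r hik h₁ _ => key k i r hik (by omega),
    fun k i r hik h₁ h₂ _ => key k i r hik (by omega),
    fun k i r hik h₁ h₂ _ => key k i r hik (by omega)⟩

open DForm in
/-- Higher algebraic identities: for `k > i ≥ 0` and `n-pk+pi+1 ≤ r ≤ pk-pi`,
`h_{(r,p(k-i))}(ω) = 0`; in particular for `n = pk` one has `h_{(r,n-pi)}(ω) = 0` for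
`pi+1 ≤ r ≤ n-pi`, and for `n = pk+1` one has `h_{(r,n-pi-1)}(ω) = 0` for
`pi+2 ≤ r ≤ n-pi-1`. -/
theorem statement19 (n p : ℕ) (hp : 1 ≤ p) (ω : DForm n) (hsym : IsSym ω)
    (hb : FirstBianchi ω p) (hgr : IsOfDeg ω p p) :
    (∀ k i r : ℕ, i < k → n + p * i + 1 ≤ r + p * k → r + p * i ≤ p * k →
      hCof ω p (k - i) r = 0) ∧
    (∀ k i r : ℕ, i < k → n = p * k → p * i + 1 ≤ r → r + p * i ≤ n →
      hCof ω p (k - i) r = 0) ∧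
    (∀ k i r : ℕ, i < k → n = p * k + 1 → p * i + 2 ≤ r → r + p * i + 1 ≤ n →
      hCof ω p (k - i) r = 0) :=
  statement19_general n p ω hgr
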